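/- arXiv:2504.13468 — 5 statements merged into one kernel-verified Lean document; each statement's English description precedes it below -/
import Mathlib

section
/- Let O₀ and O be open subsets of ℝ², and let r : O₀ → O be a C² diffeomorphism with C² inverse r̄ : O → O₀. Let v : O₀ → ℝ² be a C¹ vector field and define its inverse Piola transform v̄ : O → ℝ² by v̄_i(x) = Σ_j (∂r_i/∂y_j)(r̄(x)) · v_j(r̄(x)). Then for every y ∈ O₀ and every index i ∈ {1,2}, Σ_p (∂r̄_i/∂x_p)(r(y)) · Σ_j v̄_j(r(y)) · (∂v̄_p/∂x_j)(r(y)) = Σ_j v_j(y) · (∇_j v)_i(y); that is, the Piola transform carries the convective nonlinearity (v̄·∇)v̄ to the covariant nonlinearity N(v,v)_i = v_j (∇_j v)_i. -/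
open MeasureTheory

/-- `pdv f i j y` = ∂f_i/∂y_j (y), for a vector field `f : ℝ² → ℝ²`. -/
noncomputable def pdv (f : (Fin 2 → ℝ) → Fin 2 → ℝ) (i j : Fin 2) (y : Fin 2 → ℝ) : ℝ :=
  fderiv ℝ f y (Pi.single j 1) i

/-- `pdv2 f i j k y` = ∂²f_i/∂y_j∂y_k (y). -/
noncomputable def pdv2 (f : (Fin 2 → ℝ) → Fin 2 → ℝ) (i j k : Fin 2) (y : Fin 2 → ℝ) : ℝ :=
  fderiv ℝ (fun z => fderiv ℝ f z (Pi.single k 1) i) y (Pi.single j 1)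

/-- `pds g j y` = ∂g/∂y_j (y), for a scalar function `g : ℝ² → ℝ`. -/
noncomputable def pds (g : (Fin 2 → ℝ) → ℝ) (j : Fin 2) (y : Fin 2 → ℝ) : ℝ :=
  fderiv ℝ g y (Pi.single j 1)

/-- Christoffel symbols Γ^i_{jk}(y) = Σ_l (∂r̄_i/∂x_l)(r y) · (∂²r_l/∂y_j∂y_k)(y). -/
noncomputable def christoffel (r rb : (Fin 2 → ℝ) → Fin 2 → ℝ) (i j k : Fin 2)
    (y : Fin 2 → ℝ) : ℝ :=
  ∑ l : Fin 2, pdv rb i l (r y) * pdv2 r l j k y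

/-- Covariant derivative `covD r rb v j i y` = (∇_j v)_i(y). -/
noncomputable def covD (r rb v : (Fin 2 → ℝ) → Fin 2 → ℝ) (j i : Fin 2) (y : Fin 2 → ℝ) : ℝ :=
  pdv v i j y + ∑ k : Fin 2, christoffel r rb i j k y * v y k

/-- Divergence of a vector field. -/
noncomputable def divg (f : (Fin 2 → ℝ) → Fin 2 → ℝ) (y : Fin 2 → ℝ) : ℝ :=
  ∑ i : Fin 2, pdv f i i y

/-- Piola transform ũ_i(y) = Σ_j (∂r̄_i/∂x_j)(r y) · u_j(r y). -/
noncomputable def piola (r rb u : (Fin 2 → ℝ) → Fin 2 → ℝ) : (Fin 2 → ℝ) → Fin 2 → ℝ :=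
  fun y i => ∑ j : Fin 2, pdv rb i j (r y) * u (r y) j

/-- Inverse Piola transform v̄_i(x) = Σ_j (∂r_i/∂y_j)(r̄ x) · v_j(r̄ x). -/
noncomputable def invPiola (r rb v : (Fin 2 → ℝ) → Fin 2 → ℝ) : (Fin 2 → ℝ) → Fin 2 → ℝ :=
  fun x i => ∑ j : Fin 2, pdv r i j (rb x) * v (rb x) j

/-- Metric coefficients h_{jk}(y) = Σ_i (∂r_i/∂y_j)(y)(∂r_i/∂y_k)(y). -/
noncomputable def hlow (r : (Fin 2 → ℝ) → Fin 2 → ℝ) (j k : Fin 2) (y : Fin 2 → ℝ) : ℝ :=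
  ∑ i : Fin 2, pdv r i j y * pdv r i k y

/-- Inverse metric coefficients h^{jk}(y) = Σ_i (∂r̄_k/∂x_i)(r y)(∂r̄_j/∂x_i)(r y). -/
noncomputable def hup (r rb : (Fin 2 → ℝ) → Fin 2 → ℝ) (j k : Fin 2) (y : Fin 2 → ℝ) : ℝ :=
  ∑ i : Fin 2, pdv rb k i (r y) * pdv rb j i (r y)

/-- Jacobian matrix of a map `f : ℝ² → ℝ²` at `x`. -/
noncomputable def jac (f : (Fin 2 → ℝ) → Fin 2 → ℝ) (x : Fin 2 → ℝ) :
    Matrix (Fin 2) (Fin 2) ℝ :=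
  Matrix.of fun i j => pdv f i j x


lemma vec_decomp (u : Fin 2 → ℝ) : u = ∑ j : Fin 2, u j • (Pi.single j 1 : Fin 2 → ℝ) := by
  funext k
  simp [Finset.sum_apply, Pi.single_apply]

lemma clm_decomp {M : Type*} [AddCommGroup M] [Module ℝ M] [TopologicalSpace M]
    (L : (Fin 2 → ℝ) →L[ℝ] M) (u : Fin 2 → ℝ) :
    L u = ∑ j : Fin 2, u j • L (Pi.single j 1) := by
  conv_lhs => rw [vec_decomp u]
  rw [map_sum]
  simp

lemma clm_sum_apply (L : (Fin 2 → ℝ) →L[ℝ] (Fin 2 → ℝ)) (u : Fin 2 → ℝ) (i : Fin 2) :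
    L u i = ∑ j : Fin 2, u j * L (Pi.single j 1) i := by
  rw [clm_decomp L u]
  simp [Finset.sum_apply]

/-- the Piola transform carries the convective nonlinearity (v̄·∇)v̄ to the
covariant nonlinearity N(v,v)_i = Σ_j v_j (∇_j v)_i:
Σ_p (∂r̄_i/∂x_p)(r y) · Σ_j v̄_j(r y) (∂v̄_p/∂x_j)(r y) = Σ_j v_j(y) (∇_j v)_i(y). -/
theorem statement3
    (O₀ O : Set (Fin 2 → ℝ)) (hO₀ : IsOpen O₀) (hO : IsOpen O)
    (r rb : (Fin 2 → ℝ) → Fin 2 → ℝ)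
    (hr : ContDiffOn ℝ 2 r O₀) (hrb : ContDiffOn ℝ 2 rb O)
    (hrO : Set.MapsTo r O₀ O) (hrbO : Set.MapsTo rb O O₀)
    (hleft : ∀ y ∈ O₀, rb (r y) = y) (hright : ∀ x ∈ O, r (rb x) = x)
    (v : (Fin 2 → ℝ) → Fin 2 → ℝ) (hv : ContDiffOn ℝ 1 v O₀) :
    ∀ y ∈ O₀, ∀ i : Fin 2,
      (∑ p : Fin 2, pdv rb i p (r y) *
          ∑ j : Fin 2, invPiola r rb v (r y) j * pdv (invPiola r rb v) p j (r y))
        = ∑ j : Fin 2, v y j * covD r rb v j i y := by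
  intro y hy i
  have hyO : r y ∈ O := hrO hy
  have hnhds₀ : O₀ ∈ nhds y := hO₀.mem_nhds hy
  have hnhds : O ∈ nhds (r y) := hO.mem_nhds hyO
  have hrd : DifferentiableAt ℝ r y :=
    (hr.differentiableOn (by norm_num)).differentiableAt hnhds₀
  have hrbd : DifferentiableAt ℝ rb (r y) :=
    (hrb.differentiableOn (by norm_num)).differentiableAt hnhds
  have hvd : DifferentiableAt ℝ v y :=
    (hv.differentiableOn (by norm_num)).differentiableAt hnhds₀
  have hFd : DifferentiableAt ℝ (fderiv ℝ r) y :=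
    ((hr.fderiv_of_isOpen (m := 1) hO₀ (by norm_num)).differentiableOn (by norm_num)).differentiableAt hnhds₀
  -- Jacobian of rb at r y is a left inverse of the Jacobian of r at y
  have hid1 : (fderiv ℝ rb (r y)).comp (fderiv ℝ r y) = ContinuousLinearMap.id ℝ (Fin 2 → ℝ) := by
    have heq : rb ∘ r =ᶠ[nhds y] id := by
      filter_upwards [hnhds₀] with z hz using hleft z hz
    rw [← fderiv_comp y hrbd hrd, heq.fderiv_eq, fderiv_id]
  have hBF : ∀ u : Fin 2 → ℝ, fderiv ℝ rb (r y) (fderiv ℝ r y u) = u := by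
    intro u
    have := congrArg (fun L : (Fin 2 → ℝ) →L[ℝ] (Fin 2 → ℝ) => L u) hid1
    simpa using this
  -- derivative of w z = (fderiv r z) (v z)
  have hw : HasFDerivAt (fun z => fderiv ℝ r z (v z))
      ((fderiv ℝ r y).comp (fderiv ℝ v y) + (fderiv ℝ (fderiv ℝ r) y).flip (v y)) y :=
    hFd.hasFDerivAt.clm_apply hvd.hasFDerivAt
  set W : (Fin 2 → ℝ) →L[ℝ] (Fin 2 → ℝ) :=
    (fderiv ℝ r y).comp (fderiv ℝ v y) + (fderiv ℝ (fderiv ℝ r) y).flip (v y) with hWdef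
  -- invPiola agrees with w ∘ rb near r y
  have hbar : invPiola r rb v =ᶠ[nhds (r y)] (fun z => fderiv ℝ r (rb z) (v (rb z))) := by
    filter_upwards [hnhds] with z hz
    funext p
    rw [clm_sum_apply]
    exact Finset.sum_congr rfl fun j _ => mul_comm _ _
  have hwrb : HasFDerivAt (fun z => fderiv ℝ r (rb z) (v (rb z)))
      (W.comp (fderiv ℝ rb (r y))) (r y) := by
    have h1 : HasFDerivAt (fun z => fderiv ℝ r z (v z)) W (rb (r y)) := by
      rw [hleft y hy]; exact hw
    exact h1.comp (r y) hrbd.hasFDerivAt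
  have hbar' : HasFDerivAt (invPiola r rb v) (W.comp (fderiv ℝ rb (r y))) (r y) :=
    hwrb.congr_of_eventuallyEq hbar
  have hDbar : fderiv ℝ (invPiola r rb v) (r y) = W.comp (fderiv ℝ rb (r y)) := hbar'.fderiv
  -- value of invPiola at r y
  have hval : invPiola r rb v (r y) = fderiv ℝ r y (v y) := by
    funext j
    rw [clm_sum_apply]
    simp only [invPiola, hleft y hy]
    exact Finset.sum_congr rfl fun k _ => mul_comm _ _
  -- inner sum equals W (v y) componentwise
  have hinner : ∀ p : Fin 2,
      (∑ j : Fin 2, invPiola r rb v (r y) j * pdv (invPiola r rb v) p j (r y))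
        = W (v y) p := by
    intro p
    have h1 : (∑ j : Fin 2, invPiola r rb v (r y) j * pdv (invPiola r rb v) p j (r y))
        = (W.comp (fderiv ℝ rb (r y))) (invPiola r rb v (r y)) p := by
      rw [clm_sum_apply]
      simp only [pdv, hDbar]
    rw [h1, hval, ContinuousLinearMap.comp_apply, hBF]
  -- identify pdv2 with the iterated derivative CLM
  have hpdv2 : ∀ l j k : Fin 2,
      pdv2 r l j k y
        = fderiv ℝ (fderiv ℝ r) y (Pi.single j 1) (Pi.single k 1) l := by
    intro l j k
    have hΦ : HasFDerivAt (fun z => fderiv ℝ r z (Pi.single k 1) l)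
        (((ContinuousLinearMap.proj l).comp
          ((ContinuousLinearMap.apply ℝ (Fin 2 → ℝ)) (Pi.single k 1))).comp
            (fderiv ℝ (fderiv ℝ r) y)) y := by
      exact (((ContinuousLinearMap.proj l).comp
          ((ContinuousLinearMap.apply ℝ (Fin 2 → ℝ)) (Pi.single k 1))).hasFDerivAt).comp y
        hFd.hasFDerivAt
    simp only [pdv2]
    rw [hΦ.fderiv]
    rfl
  -- scalar expansions
  have hD2s : ∀ k m : Fin 2,
      fderiv ℝ (fderiv ℝ r) y (v y) (Pi.single k 1) m
        = ∑ j : Fin 2, v y j * pdv2 r m j k y := by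
    intro k m
    rw [clm_decomp (fderiv ℝ (fderiv ℝ r) y) (v y)]
    simp only [ContinuousLinearMap.coe_sum', Finset.sum_apply, ContinuousLinearMap.coe_smul',
      Pi.smul_apply, ContinuousLinearMap.smul_apply, smul_eq_mul]
    exact Finset.sum_congr rfl fun j _ => by rw [hpdv2 m j k]
  have h3 : ∀ p : Fin 2, fderiv ℝ (fderiv ℝ r) y (v y) (v y) p
      = ∑ k : Fin 2, v y k * ∑ j : Fin 2, v y j * pdv2 r p j k y := by
    intro p
    rw [clm_sum_apply (fderiv ℝ (fderiv ℝ r) y (v y)) (v y) p]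
    exact Finset.sum_congr rfl fun k _ => by rw [hD2s k p]
  -- main computation
  calc (∑ p : Fin 2, pdv rb i p (r y) *
          ∑ j : Fin 2, invPiola r rb v (r y) j * pdv (invPiola r rb v) p j (r y))
      = ∑ p : Fin 2, W (v y) p * pdv rb i p (r y) := by
        exact Finset.sum_congr rfl fun p _ => by rw [hinner p]; ring
    _ = fderiv ℝ rb (r y) (W (v y)) i := (clm_sum_apply _ (W (v y)) i).symm
    _ = fderiv ℝ v y (v y) i
          + fderiv ℝ rb (r y) (fderiv ℝ (fderiv ℝ r) y (v y) (v y)) i := by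
        have hWv : W (v y) = fderiv ℝ r y (fderiv ℝ v y (v y))
            + fderiv ℝ (fderiv ℝ r) y (v y) (v y) := by
          simp [hWdef, ContinuousLinearMap.add_apply, ContinuousLinearMap.comp_apply,
            ContinuousLinearMap.flip_apply]
        rw [hWv, map_add, hBF]
        simp
    _ = ∑ j : Fin 2, v y j * covD r rb v j i y := by
        have h1 : fderiv ℝ v y (v y) i = ∑ j : Fin 2, v y j * pdv v i j y := by
          rw [clm_sum_apply]
          exact Finset.sum_congr rfl fun j _ => rfl
        have h2 : fderiv ℝ rb (r y) (fderiv ℝ (fderiv ℝ r) y (v y) (v y)) i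
            = ∑ l : Fin 2, (fderiv ℝ (fderiv ℝ r) y (v y) (v y) l) * pdv rb i l (r y) := by
          rw [clm_sum_apply]
          exact Finset.sum_congr rfl fun l _ => rfl
        rw [h1, h2]
        simp only [h3, covD, christoffel, Fin.sum_univ_two]
        ring
end

section
/- Let O₀ and O be open subsets of ℝ², and let r : O₀ → O be a C² diffeomorphism with C² inverse r̄ : O → O₀. Let v, w : O₀ → ℝ² be C¹ vector fields with inverse Piola transforms v̄, w̄ : O → ℝ², where v̄_i(x) = Σ_j (∂r_i/∂y_j)(r̄(x)) · v_j(r̄(x)) and similarly for w̄. Then for every y ∈ O₀, Σ_{i,j,k,l} h^{kl}(y) h_{ij}(y) (∇_k v)_i(y) (∇_l w)_j(y) = Σ_{i,m} (∂v̄_i/∂x_m)(r(y)) · (∂w̄_i/∂x_m)(r(y)); that is, the metric contraction of the covariant derivatives of v and w equals the Euclidean contraction ∇v̄ : ∇w̄ evaluated at r(y). -/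
open MeasureTheory

lemma vec_expand (u : Fin 2 → ℝ) :
    u = ∑ b : Fin 2, u b • (Pi.single b 1 : Fin 2 → ℝ) := by
  funext a
  simp [Finset.sum_apply, Pi.single_apply]

lemma clm_expand {F : Type*} [NormedAddCommGroup F] [NormedSpace ℝ F]
    (φ : (Fin 2 → ℝ) →L[ℝ] F) (u : Fin 2 → ℝ) :
    φ u = ∑ b : Fin 2, u b • φ (Pi.single b 1) := by
  conv_lhs => rw [vec_expand u]
  rw [map_sum]
  simp

lemma jacinv
    (O₀ O : Set (Fin 2 → ℝ)) (hO₀ : IsOpen O₀) (hO : IsOpen O)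
    (r rb : (Fin 2 → ℝ) → Fin 2 → ℝ)
    (hr : ContDiffOn ℝ 2 r O₀) (hrb : ContDiffOn ℝ 2 rb O)
    (hrO : Set.MapsTo r O₀ O)
    (hleft : ∀ y ∈ O₀, rb (r y) = y) (hright : ∀ x ∈ O, r (rb x) = x)
    (y : Fin 2 → ℝ) (hy : y ∈ O₀) (i l : Fin 2) :
    ∑ a : Fin 2, pdv r i a y * pdv rb a l (r y) = if i = l then 1 else 0 := by
  have hx : r y ∈ O := hrO hy
  have hyx : rb (r y) = y := hleft y hy
  have hrd : DifferentiableAt ℝ r y :=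
    (hr.contDiffAt (hO₀.mem_nhds hy)).differentiableAt two_ne_zero
  have hrbd : DifferentiableAt ℝ rb (r y) :=
    (hrb.contDiffAt (hO.mem_nhds hx)).differentiableAt two_ne_zero
  have hrd' : DifferentiableAt ℝ r (rb (r y)) := by rw [hyx]; exact hrd
  have heq : (r ∘ rb) =ᶠ[nhds (r y)] id :=
    Filter.eventuallyEq_of_mem (hO.mem_nhds hx) (fun z hz => hright z hz)
  have hAB : (fderiv ℝ r y).comp (fderiv ℝ rb (r y)) =
      ContinuousLinearMap.id ℝ (Fin 2 → ℝ) := by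
    have h2 := fderiv_comp (r y) hrd' hrbd
    rw [hyx] at h2
    rw [← h2, heq.fderiv_eq, fderiv_id]
  have h3 := congrArg (fun (L : (Fin 2 → ℝ) →L[ℝ] (Fin 2 → ℝ)) =>
    L (Pi.single l 1) i) hAB
  simp only [ContinuousLinearMap.coe_comp', Function.comp_apply,
    ContinuousLinearMap.coe_id', id_eq] at h3
  rw [clm_expand (fderiv ℝ r y) (fderiv ℝ rb (r y) (Pi.single l 1))] at h3
  simp only [Finset.sum_apply, Pi.smul_apply, smul_eq_mul, Pi.single_apply] at h3
  rw [← h3]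
  exact Finset.sum_congr rfl fun a _ => mul_comm _ _

lemma gamma_contract (r rb : (Fin 2 → ℝ) → Fin 2 → ℝ) (y : Fin 2 → ℝ)
    (hj : ∀ i l : Fin 2, ∑ a : Fin 2, pdv r i a y * pdv rb a l (r y) = if i = l then 1 else 0)
    (i b k : Fin 2) :
    ∑ a : Fin 2, pdv r i a y * christoffel r rb a b k y = pdv2 r i b k y := by
  have h0 := hj i 0
  have h1 := hj i 1
  simp only [christoffel, Fin.sum_univ_two] at *
  fin_cases i <;>
    simp only [Fin.zero_eta, Fin.mk_one, Fin.isValue] at h0 h1 ⊢ <;>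
    norm_num at h0 h1 ⊢ <;>
    linear_combination pdv2 r 0 b k y * h0 + pdv2 r 1 b k y * h1

lemma key_deriv
    (O₀ O : Set (Fin 2 → ℝ)) (hO₀ : IsOpen O₀) (hO : IsOpen O)
    (r rb : (Fin 2 → ℝ) → Fin 2 → ℝ)
    (hr : ContDiffOn ℝ 2 r O₀) (hrb : ContDiffOn ℝ 2 rb O)
    (hrO : Set.MapsTo r O₀ O)
    (hleft : ∀ y ∈ O₀, rb (r y) = y)
    (hj : ∀ y ∈ O₀, ∀ i l : Fin 2,
      ∑ a : Fin 2, pdv r i a y * pdv rb a l (r y) = if i = l then 1 else 0)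
    (v : (Fin 2 → ℝ) → Fin 2 → ℝ) (hv : ContDiffOn ℝ 1 v O₀)
    (y : Fin 2 → ℝ) (hy : y ∈ O₀) (i m : Fin 2) :
    pdv (invPiola r rb v) i m (r y)
      = ∑ b : Fin 2, ∑ a : Fin 2,
          pdv rb b m (r y) * (pdv r i a y * covD r rb v b a y) := by
  have hx : r y ∈ O := hrO hy
  have hyx : rb (r y) = y := hleft y hy
  have hr2 : ContDiffAt ℝ 2 r y := hr.contDiffAt (hO₀.mem_nhds hy)
  have hrbd : DifferentiableAt ℝ rb (r y) :=
    (hrb.contDiffAt (hO.mem_nhds hx)).differentiableAt two_ne_zero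
  have hvd : DifferentiableAt ℝ v y :=
    (hv.contDiffAt (hO₀.mem_nhds hy)).differentiableAt one_ne_zero
  have hvc : ∀ j : Fin 2, DifferentiableAt ℝ (fun z => v z j) y := by
    intro j
    exact differentiableAt_pi.mp hvd j
  have hDr : ContDiffAt ℝ 1 (fderiv ℝ r) y := hr2.fderiv_right (by norm_num)
  have hpdvr : ∀ i' j : Fin 2, DifferentiableAt ℝ (pdv r i' j) y := by
    intro i' j
    have h1 : DifferentiableAt ℝ (fderiv ℝ r) y := hDr.differentiableAt one_ne_zero
    have h2 : DifferentiableAt ℝ (fun z => fderiv ℝ r z (Pi.single j 1)) y :=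
      h1.clm_apply (differentiableAt_const _)
    exact differentiableAt_pi.mp h2 i'
  have hGd : ∀ i' : Fin 2,
      DifferentiableAt ℝ (fun z => ∑ j : Fin 2, pdv r i' j z * v z j) y := by
    intro i'
    exact DifferentiableAt.fun_sum fun j _ => (hpdvr i' j).mul (hvc j)
  have hGd' : ∀ i' : Fin 2,
      DifferentiableAt ℝ (fun z => ∑ j : Fin 2, pdv r i' j z * v z j) (rb (r y)) := by
    rw [hyx]; exact hGd
  have hinv : ∀ i' : Fin 2, DifferentiableAt ℝ (fun x' => invPiola r rb v x' i') (r y) :=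
    fun i' => (hGd' i').comp (r y) hrbd
  have hpi : pdv (invPiola r rb v) i m (r y)
      = fderiv ℝ (fun x' => invPiola r rb v x' i) (r y) (Pi.single m 1) := by
    show fderiv ℝ (invPiola r rb v) (r y) (Pi.single m 1) i = _
    rw [show (invPiola r rb v) = (fun x' i' => invPiola r rb v x' i') from rfl,
      fderiv_pi hinv]
    rfl
  have hchain : fderiv ℝ (fun x' => invPiola r rb v x' i) (r y) (Pi.single m 1)
      = fderiv ℝ (fun z => ∑ j : Fin 2, pdv r i j z * v z j) y
          (fderiv ℝ rb (r y) (Pi.single m 1)) := by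
    have h := fderiv_comp (r y) (hGd' i) hrbd
    rw [hyx] at h
    have h2 : fderiv ℝ (fun x' => invPiola r rb v x' i) (r y)
        = fderiv ℝ ((fun z => ∑ j : Fin 2, pdv r i j z * v z j) ∘ rb) (r y) := rfl
    rw [h2, h]
    rfl
  set u := fderiv ℝ rb (r y) (Pi.single m 1) with hu
  have hub : ∀ b : Fin 2, u b = pdv rb b m (r y) := fun b => rfl
  have hvcomp : ∀ j : Fin 2, fderiv ℝ (fun z => v z j) y u = fderiv ℝ v y u j := by
    intro j
    rw [show v = (fun z j' => v z j') from rfl, fderiv_pi hvc]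
    rfl
  have hGval : fderiv ℝ (fun z => ∑ j : Fin 2, pdv r i j z * v z j) y u
      = ∑ j : Fin 2, (pdv r i j y * (fderiv ℝ v y u j)
          + v y j * (fderiv ℝ (pdv r i j) y u)) := by
    rw [fderiv_fun_sum (fun j _ => (hpdvr i j).fun_mul (hvc j)), ContinuousLinearMap.sum_apply]
    refine Finset.sum_congr rfl fun j _ => ?_
    rw [fderiv_fun_mul (hpdvr i j) (hvc j)]
    simp [hvcomp j]
  have h1 : ∀ j : Fin 2, fderiv ℝ v y u j
      = ∑ b : Fin 2, pdv rb b m (r y) * pdv v j b y := by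
    intro j
    rw [clm_expand (fderiv ℝ v y) u, Finset.sum_apply]
    refine Finset.sum_congr rfl fun b _ => ?_
    simp only [Pi.smul_apply, smul_eq_mul]
    rw [hub b]
    rfl
  have h2 : ∀ j : Fin 2, fderiv ℝ (pdv r i j) y u
      = ∑ b : Fin 2, pdv rb b m (r y) * pdv2 r i b j y := by
    intro j
    rw [clm_expand (fderiv ℝ (pdv r i j) y) u]
    refine Finset.sum_congr rfl fun b _ => ?_
    rw [smul_eq_mul, hub b]
    rfl
  rw [hpi, hchain, hGval]
  simp only [h1, h2]
  have hgam : ∀ b k : Fin 2,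
      pdv2 r i b k y = ∑ a : Fin 2, pdv r i a y * christoffel r rb a b k y :=
    fun b k => (gamma_contract r rb y (hj y hy) i b k).symm
  simp only [hgam, covD, Fin.sum_univ_two]
  ring

/-- the metric contraction of the covariant derivatives of v and w equals the
Euclidean contraction ∇v̄ : ∇w̄ evaluated at r(y):
Σ_{i,j,k,l} h^{kl} h_{ij} (∇_k v)_i (∇_l w)_j = Σ_{i,m} (∂v̄_i/∂x_m)(r y) (∂w̄_i/∂x_m)(r y). -/
theorem statement4
    (O₀ O : Set (Fin 2 → ℝ)) (hO₀ : IsOpen O₀) (hO : IsOpen O)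
    (r rb : (Fin 2 → ℝ) → Fin 2 → ℝ)
    (hr : ContDiffOn ℝ 2 r O₀) (hrb : ContDiffOn ℝ 2 rb O)
    (hrO : Set.MapsTo r O₀ O) (hrbO : Set.MapsTo rb O O₀)
    (hleft : ∀ y ∈ O₀, rb (r y) = y) (hright : ∀ x ∈ O, r (rb x) = x)
    (v w : (Fin 2 → ℝ) → Fin 2 → ℝ)
    (hv : ContDiffOn ℝ 1 v O₀) (hw : ContDiffOn ℝ 1 w O₀) :
    ∀ y ∈ O₀,
      (∑ i : Fin 2, ∑ j : Fin 2, ∑ k : Fin 2, ∑ l : Fin 2,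
          hup r rb k l y * hlow r i j y * covD r rb v k i y * covD r rb w l j y)
        = ∑ i : Fin 2, ∑ m : Fin 2,
            pdv (invPiola r rb v) i m (r y) * pdv (invPiola r rb w) i m (r y) := by
  intro y hy
  have hj : ∀ y' ∈ O₀, ∀ i l : Fin 2,
      ∑ a : Fin 2, pdv r i a y' * pdv rb a l (r y') = if i = l then 1 else 0 :=
    fun y' hy' i l => jacinv O₀ O hO₀ hO r rb hr hrb hrO hleft hright y' hy' i l
  have hkv : ∀ i m : Fin 2, pdv (invPiola r rb v) i m (r y)
      = ∑ b : Fin 2, ∑ a : Fin 2, pdv rb b m (r y) * (pdv r i a y * covD r rb v b a y) :=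
    fun i m => key_deriv O₀ O hO₀ hO r rb hr hrb hrO hleft hj v hv y hy i m
  have hkw : ∀ i m : Fin 2, pdv (invPiola r rb w) i m (r y)
      = ∑ b : Fin 2, ∑ a : Fin 2, pdv rb b m (r y) * (pdv r i a y * covD r rb w b a y) :=
    fun i m => key_deriv O₀ O hO₀ hO r rb hr hrb hrO hleft hj w hw y hy i m
  simp only [hkv, hkw, hup, hlow, Fin.sum_univ_two]
  ring
end

section
/- Let O₀ and O be open subsets of ℝ², and let r : O₀ → O be a C² diffeomorphism with C² inverse r̄ : O → O₀ such that det(Dr̄(x)) = 1 for all x ∈ O. Let v, w : O₀ → ℝ² be C¹ vector fields with inverse Piola transforms v̄, w̄ : O → ℝ², where v̄_i(x) = Σ_j (∂r_i/∂y_j)(r̄(x)) · v_j(r̄(x)) and similarly for w̄. If the function y ↦ Σ_{i,j,k,l} h^{kl}(y) h_{ij}(y) (∇_k v)_i(y) (∇_l w)_j(y) is Lebesgue integrable on O₀, then ∫_{O₀} Σ_{i,j,k,l} h^{kl} h_{ij} (∇_k v)_i (∇_l w)_j dy = ∫_{O} Σ_{i,m} (∂v̄_i/∂x_m)(x) (∂w̄_i/∂x_m)(x)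 dx. -/
open MeasureTheory

section Aux

lemma pi_expand (u : Fin 2 → ℝ) : u = ∑ p : Fin 2, u p • (Pi.single p (1:ℝ) : Fin 2 → ℝ) := by
  ext q
  simp [Pi.single_apply, Finset.sum_ite_eq, eq_comm]

lemma clm_eval {F : Type*} [NormedAddCommGroup F] [NormedSpace ℝ F]
    (f : (Fin 2 → ℝ) →L[ℝ] F) (u : Fin 2 → ℝ) :
    f u = ∑ p : Fin 2, u p • f (Pi.single p 1) := by
  conv_lhs => rw [pi_expand u]
  rw [map_sum]
  simp

lemma clm_eval' (f : (Fin 2 → ℝ) →L[ℝ] ℝ) (u : Fin 2 → ℝ) :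
    f u = ∑ p : Fin 2, u p * f (Pi.single p 1) := by
  simpa [smul_eq_mul] using clm_eval f u

/-- evaluation-at-component CLM: `A ↦ A (single j) i` -/
noncomputable def evC (i j : Fin 2) : ((Fin 2 → ℝ) →L[ℝ] (Fin 2 → ℝ)) →L[ℝ] ℝ :=
  (ContinuousLinearMap.proj i).comp (ContinuousLinearMap.apply ℝ (Fin 2 → ℝ) (Pi.single j 1))

@[simp] lemma evC_apply (i j : Fin 2) (A : (Fin 2 → ℝ) →L[ℝ] (Fin 2 → ℝ)) :
    evC i j A = A (Pi.single j 1) i := rfl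

lemma hasFDerivAt_pdv (f : (Fin 2 → ℝ) → Fin 2 → ℝ) (y : Fin 2 → ℝ)
    (h : DifferentiableAt ℝ (fderiv ℝ f) y) (i j : Fin 2) :
    HasFDerivAt (pdv f i j) ((evC i j).comp (fderiv ℝ (fderiv ℝ f) y)) y :=
  ((evC i j).hasFDerivAt).comp y h.hasFDerivAt

lemma pdv2_eq (f : (Fin 2 → ℝ) → Fin 2 → ℝ) (y : Fin 2 → ℝ)
    (h : DifferentiableAt ℝ (fderiv ℝ f) y) (i p j : Fin 2) :
    pdv2 f i p j y = (fderiv ℝ (fderiv ℝ f) y (Pi.single p 1)) (Pi.single j 1) i := by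
  have h1 := (hasFDerivAt_pdv f y h i j).fderiv
  have h2 : pdv2 f i p j y = fderiv ℝ (pdv f i j) y (Pi.single p 1) := rfl
  rw [h2, h1]; rfl

lemma pdv_invPiola (r rb v : (Fin 2 → ℝ) → Fin 2 → ℝ) (x : Fin 2 → ℝ)
    (hdrb : DifferentiableAt ℝ rb x)
    (hdv : DifferentiableAt ℝ v (rb x))
    (hdfr : DifferentiableAt ℝ (fderiv ℝ r) (rb x)) (i m : Fin 2) :
    pdv (invPiola r rb v) i m x
      = ∑ j : Fin 2, ∑ p : Fin 2, pdv rb p m x *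
          (pdv2 r i p j (rb x) * v (rb x) j
            + pdv r i j (rb x) * pdv v j p (rb x)) := by
  set y := rb x with hy
  set Drb := fderiv ℝ rb x with hDrb
  set D2r := fderiv ℝ (fderiv ℝ r) y with hD2r
  set Dv := fderiv ℝ v y with hDv
  have hA : ∀ i j : Fin 2, HasFDerivAt (fun x' => pdv r i j (rb x'))
      (((evC i j).comp D2r).comp Drb) x := fun i j =>
    (hasFDerivAt_pdv r y hdfr i j).comp x hdrb.hasFDerivAt
  have hB : ∀ j : Fin 2, HasFDerivAt (fun x' => v (rb x') j)
      (((ContinuousLinearMap.proj j).comp Dv).comp Drb) x := fun j => by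
    have h1 := (((ContinuousLinearMap.proj j : (Fin 2 → ℝ) →L[ℝ] ℝ)).hasFDerivAt.comp y
      hdv.hasFDerivAt).comp x hdrb.hasFDerivAt
    exact h1
  have hG : ∀ i : Fin 2, HasFDerivAt (fun x' => ∑ j : Fin 2, pdv r i j (rb x') * v (rb x') j)
      (∑ j : Fin 2, (pdv r i j y • (((ContinuousLinearMap.proj j).comp Dv).comp Drb)
        + v y j • (((evC i j).comp D2r).comp Drb))) x := by
    intro i
    exact HasFDerivAt.fun_sum fun j _ => (hA i j).mul (hB j)
  have hPi : HasFDerivAt (invPiola r rb v)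
      (ContinuousLinearMap.pi fun i => (∑ j : Fin 2,
        (pdv r i j y • (((ContinuousLinearMap.proj j).comp Dv).comp Drb)
          + v y j • (((evC i j).comp D2r).comp Drb)))) x := by
    exact hasFDerivAt_pi.2 hG
  have hfd : pdv (invPiola r rb v) i m x
      = (∑ j : Fin 2, (pdv r i j y • (((ContinuousLinearMap.proj j).comp Dv).comp Drb)
          + v y j • (((evC i j).comp D2r).comp Drb))) (Pi.single m 1) := by
    show (fderiv ℝ (invPiola r rb v) x) (Pi.single m 1) i = _
    rw [hPi.fderiv]; rfl
  rw [hfd, ContinuousLinearMap.sum_apply]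
  refine Finset.sum_congr rfl fun j _ => ?_
  -- evaluate one summand
  have e1 : (((ContinuousLinearMap.proj j).comp Dv).comp Drb) (Pi.single m 1)
      = ∑ p : Fin 2, pdv rb p m x * pdv v j p y := by
    show ((ContinuousLinearMap.proj j).comp Dv) (Drb (Pi.single m 1)) = _
    rw [clm_eval' ((ContinuousLinearMap.proj j).comp Dv) (Drb (Pi.single m 1))]
    exact Finset.sum_congr rfl fun p _ => rfl
  have e2 : ∀ i : Fin 2, (((evC i j).comp D2r).comp Drb) (Pi.single m 1)
      = ∑ p : Fin 2, pdv rb p m x * pdv2 r i p j y := by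
    intro i
    show ((evC i j).comp D2r) (Drb (Pi.single m 1)) = _
    rw [clm_eval' ((evC i j).comp D2r) (Drb (Pi.single m 1))]
    refine Finset.sum_congr rfl fun p _ => ?_
    rw [pdv2_eq r y hdfr i p j]
    rfl
  rw [ContinuousLinearMap.add_apply, ContinuousLinearMap.smul_apply,
    ContinuousLinearMap.smul_apply, e1, e2, smul_eq_mul, smul_eq_mul,
    Finset.mul_sum, Finset.mul_sum, ← Finset.sum_add_distrib]
  exact Finset.sum_congr rfl fun p _ => by ring

lemma chain_id (O : Set (Fin 2 → ℝ)) (hO : IsOpen O) (r rb : (Fin 2 → ℝ) → Fin 2 → ℝ)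
    (hright : ∀ x ∈ O, r (rb x) = x) (x : Fin 2 → ℝ) (hx : x ∈ O)
    (hdrb : DifferentiableAt ℝ rb x) (hdr : DifferentiableAt ℝ r (rb x)) (i l : Fin 2) :
    ∑ j : Fin 2, pdv r i j (rb x) * pdv rb j l x = if i = l then 1 else 0 := by
  have hcomp : HasFDerivAt (r ∘ rb) ((fderiv ℝ r (rb x)).comp (fderiv ℝ rb x)) x :=
    hdr.hasFDerivAt.comp x hdrb.hasFDerivAt
  have heq : r ∘ rb =ᶠ[nhds x] id := by
    filter_upwards [hO.mem_nhds hx] with z hz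
    exact hright z hz
  have hid : HasFDerivAt (r ∘ rb) (ContinuousLinearMap.id ℝ (Fin 2 → ℝ)) x :=
    (hasFDerivAt_id x).congr_of_eventuallyEq heq
  have huniq := hcomp.unique hid
  have hval := congrFun (congrArg (fun (T : (Fin 2 → ℝ) →L[ℝ] (Fin 2 → ℝ)) =>
    (T (Pi.single l 1) : Fin 2 → ℝ)) huniq) i
  simp only [ContinuousLinearMap.coe_comp', Function.comp_apply,
    ContinuousLinearMap.coe_id', id_eq] at hval
  have hexp : (fderiv ℝ r (rb x)) ((fderiv ℝ rb x) (Pi.single l 1)) i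
      = ∑ j : Fin 2, pdv r i j (rb x) * pdv rb j l x := by
    have h1 := clm_eval' ((ContinuousLinearMap.proj i).comp (fderiv ℝ r (rb x)))
      ((fderiv ℝ rb x) (Pi.single l 1))
    have h2 : ((ContinuousLinearMap.proj i).comp (fderiv ℝ r (rb x)))
        ((fderiv ℝ rb x) (Pi.single l 1))
        = (fderiv ℝ r (rb x)) ((fderiv ℝ rb x) (Pi.single l 1)) i := rfl
    rw [← h2, h1]
    exact Finset.sum_congr rfl fun j _ => by rw [mul_comm]; rfl
  rw [← hexp, hval, Pi.single_apply]

lemma cov_identity (r rb : (Fin 2 → ℝ) → Fin 2 → ℝ) (y x : Fin 2 → ℝ) (hrx : r y = x)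
    (hchain : ∀ i l : Fin 2, ∑ j : Fin 2, pdv r i j y * pdv rb j l x = if i = l then 1 else 0)
    (v : (Fin 2 → ℝ) → Fin 2 → ℝ) (p i : Fin 2) :
    ∑ j : Fin 2, (pdv2 r i p j y * v y j + pdv r i j y * pdv v j p y)
      = ∑ j : Fin 2, pdv r i j y * covD r rb v p j y := by
  have h0 := hchain i 0
  have h1 := hchain i 1
  simp only [Fin.sum_univ_two] at h0 h1 ⊢
  simp only [covD, christoffel, hrx, Fin.sum_univ_two]
  fin_cases i <;>
    norm_num [Fin.ext_iff] at h0 h1 ⊢ <;>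
  linear_combination (-(pdv2 r 0 p 0 y * v y 0 + pdv2 r 0 p 1 y * v y 1)) * h0 +
    (-(pdv2 r 1 p 0 y * v y 0 + pdv2 r 1 p 1 y * v y 1)) * h1

lemma pointwise_eq
    (O₀ O : Set (Fin 2 → ℝ)) (hO₀ : IsOpen O₀) (hO : IsOpen O)
    (r rb : (Fin 2 → ℝ) → Fin 2 → ℝ)
    (hr : ContDiffOn ℝ 2 r O₀) (hrb : ContDiffOn ℝ 2 rb O)
    (hrbO : Set.MapsTo rb O O₀)
    (hright : ∀ x ∈ O, r (rb x) = x)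
    (v w : (Fin 2 → ℝ) → Fin 2 → ℝ)
    (hv : ContDiffOn ℝ 1 v O₀) (hw : ContDiffOn ℝ 1 w O₀)
    (x : Fin 2 → ℝ) (hx : x ∈ O) :
    ∑ i : Fin 2, ∑ m : Fin 2,
        pdv (invPiola r rb v) i m x * pdv (invPiola r rb w) i m x
      = ∑ i : Fin 2, ∑ j : Fin 2, ∑ k : Fin 2, ∑ l : Fin 2,
          hup r rb k l (rb x) * hlow r i j (rb x)
            * covD r rb v k i (rb x) * covD r rb w l j (rb x) := by
  have hy : rb x ∈ O₀ := hrbO hx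
  have hdrb : DifferentiableAt ℝ rb x :=
    (hrb.contDiffAt (hO.mem_nhds hx)).differentiableAt two_ne_zero
  have hdr : DifferentiableAt ℝ r (rb x) :=
    (hr.contDiffAt (hO₀.mem_nhds hy)).differentiableAt two_ne_zero
  have hdv : DifferentiableAt ℝ v (rb x) :=
    (hv.contDiffAt (hO₀.mem_nhds hy)).differentiableAt one_ne_zero
  have hdw : DifferentiableAt ℝ w (rb x) :=
    (hw.contDiffAt (hO₀.mem_nhds hy)).differentiableAt one_ne_zero
  have hdfr : DifferentiableAt ℝ (fderiv ℝ r) (rb x) :=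
    ((hr.contDiffAt (hO₀.mem_nhds hy)).fderiv_right (m := 1)
      (by norm_num)).differentiableAt one_ne_zero
  have hrx : r (rb x) = x := hright x hx
  have hchain := chain_id O hO r rb hright x hx hdrb hdr
  have stepA : ∀ u : (Fin 2 → ℝ) → Fin 2 → ℝ, DifferentiableAt ℝ u (rb x) →
      ∀ i m : Fin 2, pdv (invPiola r rb u) i m x
        = ∑ p : Fin 2, pdv rb p m x *
            ∑ j : Fin 2, pdv r i j (rb x) * covD r rb u p j (rb x) := by
    intro u hdu i m
    rw [pdv_invPiola r rb u x hdrb hdu hdfr i m, Finset.sum_comm]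
    refine Finset.sum_congr rfl fun p _ => ?_
    rw [← cov_identity r rb (rb x) x hrx hchain u p i, Finset.mul_sum]
  have hAv := stepA v hdv
  have hAw := stepA w hdw
  simp only [hAv, hAw, hup, hlow, hrx, Fin.sum_univ_two]
  ring

end Aux

/-- under a volume-preserving C² diffeomorphism, if the metric contraction of
the covariant derivatives of v and w is integrable on O₀, then
∫_{O₀} Σ h^{kl} h_{ij} (∇_k v)_i (∇_l w)_j dy = ∫_O Σ_{i,m} ∂v̄_i/∂x_m ∂w̄_i/∂x_m dx. -/
theorem statement5
    (O₀ O : Set (Fin 2 → ℝ)) (hO₀ : IsOpen O₀) (hO : IsOpen O)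
    (r rb : (Fin 2 → ℝ) → Fin 2 → ℝ)
    (hr : ContDiffOn ℝ 2 r O₀) (hrb : ContDiffOn ℝ 2 rb O)
    (hrO : Set.MapsTo r O₀ O) (hrbO : Set.MapsTo rb O O₀)
    (hleft : ∀ y ∈ O₀, rb (r y) = y) (hright : ∀ x ∈ O, r (rb x) = x)
    (hdet : ∀ x ∈ O, (jac rb x).det = 1)
    (v w : (Fin 2 → ℝ) → Fin 2 → ℝ)
    (hv : ContDiffOn ℝ 1 v O₀) (hw : ContDiffOn ℝ 1 w O₀)
    (hint : IntegrableOn (fun y =>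
        ∑ i : Fin 2, ∑ j : Fin 2, ∑ k : Fin 2, ∑ l : Fin 2,
          hup r rb k l y * hlow r i j y * covD r rb v k i y * covD r rb w l j y) O₀) :
    (∫ y in O₀, ∑ i : Fin 2, ∑ j : Fin 2, ∑ k : Fin 2, ∑ l : Fin 2,
        hup r rb k l y * hlow r i j y * covD r rb v k i y * covD r rb w l j y)
      = ∫ x in O, ∑ i : Fin 2, ∑ m : Fin 2,
          pdv (invPiola r rb v) i m x * pdv (invPiola r rb w) i m x := by
  have himg : rb '' O = O₀ := by
    apply Set.Subset.antisymm
    · exact Set.image_subset_iff.2 hrbO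
    · intro y hy
      exact ⟨r y, hrO hy, hleft y hy⟩
  have hder : ∀ x ∈ O, HasFDerivWithinAt rb (fderiv ℝ rb x) O x := fun x hx =>
    ((hrb.contDiffAt (hO.mem_nhds hx)).differentiableAt
      two_ne_zero).hasFDerivAt.hasFDerivWithinAt
  have hinj : Set.InjOn rb O := fun a ha b hb h => by
    rw [← hright a ha, h, hright b hb]
  have hdetCL : ∀ x ∈ O, (fderiv ℝ rb x).det = 1 := by
    intro x hx
    have hm : LinearMap.toMatrix (Pi.basisFun ℝ (Fin 2)) (Pi.basisFun ℝ (Fin 2))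
        (fderiv ℝ rb x : (Fin 2 → ℝ) →ₗ[ℝ] (Fin 2 → ℝ)) = jac rb x := by
      ext i j
      rw [LinearMap.toMatrix_apply]
      simp [Pi.basisFun_apply, Pi.basisFun_repr, jac, pdv]
    have hd : (fderiv ℝ rb x).det
        = (LinearMap.toMatrix (Pi.basisFun ℝ (Fin 2)) (Pi.basisFun ℝ (Fin 2))
            (fderiv ℝ rb x : (Fin 2 → ℝ) →ₗ[ℝ] (Fin 2 → ℝ))).det :=
      (LinearMap.det_toMatrix _ _).symm
    rw [hd, hm, hdet x hx]
  have hcv := integral_image_eq_integral_abs_det_fderiv_smul (μ := volume)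
    hO.measurableSet hder hinj
    (fun y => ∑ i : Fin 2, ∑ j : Fin 2, ∑ k : Fin 2, ∑ l : Fin 2,
      hup r rb k l y * hlow r i j y * covD r rb v k i y * covD r rb w l j y)
  rw [himg] at hcv
  rw [hcv]
  refine setIntegral_congr_fun hO.measurableSet fun x hx => ?_
  have hpt := pointwise_eq O₀ O hO₀ hO r rb hr hrb hrbO hright v w hv hw x hx
  rw [hdetCL x hx]
  simp only [abs_one, one_smul]
  exact hpt.symm
end

section
/- Let O₀ and O be open subsets of ℝ², and let r : O₀ → O be a C¹ diffeomorphism with C¹ inverse r̄ : O → O₀ such that det(Dr̄(x)) = 1 for all x ∈ O. Let v, w : O₀ → ℝ² be measurable vector fields with inverse Piola transforms v̄, w̄ : O → ℝ², where v̄_i(x) = Σ_j (∂r_i/∂y_j)(r̄(x)) · v_j(r̄(x)) and similarly for w̄. If the function y ↦ Σ_{i,j} h_{ij}(y) v_i(y) w_j(y) is Lebesgue integrable on O₀, then ∫_{O₀} Σ_{i,j} h_{ij}(y) v_i(y) w_j(y) dy = ∫_{O} v̄(x) · w̄(x) dx; that is, the weighted L² pairing of v and w on O₀ with weight matrix h equals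 the L² inner product of v̄ and w̄ on O. -/
open MeasureTheory

lemma jac_det_eq_clmDet (f : (Fin 2 → ℝ) → Fin 2 → ℝ) (x : Fin 2 → ℝ) :
    (jac f x).det = (fderiv ℝ f x).det := by
  have h : jac f x
      = LinearMap.toMatrix' ((fderiv ℝ f x) : (Fin 2 → ℝ) →ₗ[ℝ] (Fin 2 → ℝ)) := by
    ext i j
    simp only [jac, Matrix.of_apply, pdv, LinearMap.toMatrix'_apply,
      ContinuousLinearMap.coe_coe]
  rw [h, LinearMap.det_toMatrix']

/-- for a volume-preserving C¹ diffeomorphism and measurable vector fields v, w,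
the h-weighted L² pairing of v and w on O₀ equals the L² inner product of v̄ and w̄ on O. -/
theorem statement6
    (O₀ O : Set (Fin 2 → ℝ)) (hO₀ : IsOpen O₀) (hO : IsOpen O)
    (r rb : (Fin 2 → ℝ) → Fin 2 → ℝ)
    (hr : ContDiffOn ℝ 1 r O₀) (hrb : ContDiffOn ℝ 1 rb O)
    (hrO : Set.MapsTo r O₀ O) (hrbO : Set.MapsTo rb O O₀)
    (hleft : ∀ y ∈ O₀, rb (r y) = y) (hright : ∀ x ∈ O, r (rb x) = x)
    (hdet : ∀ x ∈ O, (jac rb x).det = 1)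
    (v w : (Fin 2 → ℝ) → Fin 2 → ℝ)
    (hv : Measurable v) (hw : Measurable w)
    (hint : IntegrableOn (fun y =>
        ∑ i : Fin 2, ∑ j : Fin 2, hlow r i j y * v y i * w y j) O₀) :
    (∫ y in O₀, ∑ i : Fin 2, ∑ j : Fin 2, hlow r i j y * v y i * w y j)
      = ∫ x in O, ∑ i : Fin 2, invPiola r rb v x i * invPiola r rb w x i := by
  have hOeq : O = r '' O₀ := by
    apply Set.Subset.antisymm
    · intro x hx; exact ⟨rb x, hrbO hx, hright x hx⟩
    · rintro _ ⟨y, hy, rfl⟩; exact hrO hy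
  have hinj : Set.InjOn r O₀ := fun a ha b hb h => by
    rw [← hleft a ha, h, hleft b hb]
  have hdiff_r : ∀ y ∈ O₀, DifferentiableAt ℝ r y := fun y hy =>
    (hr.contDiffAt (hO₀.mem_nhds hy)).differentiableAt one_ne_zero
  have hdiff_rb : ∀ x ∈ O, DifferentiableAt ℝ rb x := fun x hx =>
    (hrb.contDiffAt (hO.mem_nhds hx)).differentiableAt one_ne_zero
  have hdet_r : ∀ y ∈ O₀, (fderiv ℝ r y).det = 1 := by
    intro y hy
    have hcomp : fderiv ℝ (rb ∘ r) y =
        (fderiv ℝ rb (r y)).comp (fderiv ℝ r y) :=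
      fderiv_comp (x := y) (hdiff_rb (r y) (hrO hy)) (hdiff_r y hy)
    have hid : fderiv ℝ (rb ∘ r) y = fderiv ℝ id y := by
      apply Filter.EventuallyEq.fderiv_eq
      filter_upwards [hO₀.mem_nhds hy] with z hz
      exact hleft z hz
    have hdetrb : (fderiv ℝ rb (r y)).det = 1 := by
      rw [← jac_det_eq_clmDet]; exact hdet (r y) (hrO hy)
    have h1 : ((fderiv ℝ rb (r y)).comp (fderiv ℝ r y)).det = 1 := by
      rw [← hcomp, hid, fderiv_id]
      simp [ContinuousLinearMap.det]
    have h2 : ((fderiv ℝ rb (r y)).comp (fderiv ℝ r y)).det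
        = (fderiv ℝ rb (r y)).det * (fderiv ℝ r y).det := by
      simp only [ContinuousLinearMap.det, ContinuousLinearMap.coe_comp]
      exact LinearMap.det_comp _ _
    rw [h2, hdetrb, one_mul] at h1
    exact h1
  have key := MeasureTheory.integral_image_eq_integral_abs_det_fderiv_smul
    (volume) hO₀.measurableSet
    (fun y hy => ((hdiff_r y hy).hasFDerivAt).hasFDerivWithinAt) hinj
    (fun x => ∑ i : Fin 2, invPiola r rb v x i * invPiola r rb w x i)
  rw [hOeq, key]
  apply MeasureTheory.setIntegral_congr_fun hO₀.measurableSet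
  intro y hy
  simp only
  rw [hdet_r y hy]
  simp only [abs_one, one_smul]
  have hinv : ∀ u : (Fin 2 → ℝ) → Fin 2 → ℝ, ∀ i,
      invPiola r rb u (r y) i = ∑ j : Fin 2, pdv r i j y * u y j := by
    intro u i
    simp [invPiola, hleft y hy]
  simp only [hinv]
  simp only [hlow, Fin.sum_univ_two]
  ring
end

section
/- For all real numbers a > 0, ε > 0, and all μ, b with μ ≥ b > 0, the following inequality holds: a · μ · (1 + log(μ²/b²))^{1/2} ≤ ε · μ² + (a²/ε) · log(2a/(ε b)). -/
/-- for a > 0, ε > 0 and μ ≥ b > 0,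
a·μ·(1 + log(μ²/b²))^{1/2} ≤ ε·μ² + (a²/ε)·log(2a/(εb)). -/
theorem statement10 (a ε μ b : ℝ) (ha : 0 < a) (hε : 0 < ε) (hb : 0 < b) (hμ : b ≤ μ) :
    a * μ * Real.sqrt (1 + Real.log (μ ^ 2 / b ^ 2))
      ≤ ε * μ ^ 2 + a ^ 2 / ε * Real.log (2 * a / (ε * b)) := by
  have hμ0 : 0 < μ := lt_of_lt_of_le hb hμ
  obtain ⟨c, hc⟩ : ∃ c : ℝ, c = 2 * a / ε := ⟨_, rfl⟩
  have hc0 : 0 < c := by rw [hc]; positivity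
  obtain ⟨K, hK⟩ : ∃ K : ℝ, K = Real.log (c ^ 2 / b ^ 2) := ⟨_, rfl⟩
  -- rewrite the RHS log term
  have hcbq : c ^ 2 / b ^ 2 = (2 * a / (ε * b)) ^ 2 := by
    rw [← div_pow, hc, div_div]
  have hrhs : a ^ 2 / ε * Real.log (2 * a / (ε * b)) = a ^ 2 / (2 * ε) * K := by
    rw [hK, hcbq, Real.log_pow]
    push_cast
    field_simp
  -- split the log
  have hsplit : Real.log (μ ^ 2 / b ^ 2) = Real.log (μ ^ 2 / c ^ 2) + K := by
    rw [hK, Real.log_div (by positivity) (by positivity),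
        Real.log_div (by positivity) (by positivity),
        Real.log_div (by positivity) (by positivity)]
    ring
  have h1 : 1 + Real.log (μ ^ 2 / c ^ 2) ≤ μ ^ 2 / c ^ 2 := by
    have := Real.log_le_sub_one_of_pos (show (0:ℝ) < μ ^ 2 / c ^ 2 by positivity)
    linarith
  have hac : a / c = ε / 2 := by
    rw [hc]; field_simp
  have hacμ : a * μ * (μ / c) = ε / 2 * μ ^ 2 := by
    have h2 : a * μ * (μ / c) = a / c * μ ^ 2 := by ring
    rw [h2, hac]
  have hpow : (μ / c) ^ 2 = μ ^ 2 / c ^ 2 := div_pow μ c 2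
  rw [hrhs]
  rcases le_or_gt 0 K with hK0 | hK0
  · -- K ≥ 0
    have hs : Real.sqrt K ^ 2 = K := Real.sq_sqrt hK0
    have hsn : 0 ≤ Real.sqrt K := Real.sqrt_nonneg K
    have hdiv : 0 ≤ μ / c := by positivity
    have hbound : Real.sqrt (1 + Real.log (μ ^ 2 / b ^ 2)) ≤ μ / c + Real.sqrt K := by
      have hle : 1 + Real.log (μ ^ 2 / b ^ 2) ≤ (μ / c + Real.sqrt K) ^ 2 := by
        rw [hsplit]
        nlinarith [h1, hs, hpow, mul_nonneg hdiv hsn]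
      calc Real.sqrt (1 + Real.log (μ ^ 2 / b ^ 2))
          ≤ Real.sqrt ((μ / c + Real.sqrt K) ^ 2) := Real.sqrt_le_sqrt hle
        _ = μ / c + Real.sqrt K := Real.sqrt_sq (by positivity)
    have h2 : a * μ * Real.sqrt (1 + Real.log (μ ^ 2 / b ^ 2))
        ≤ a * μ * (μ / c + Real.sqrt K) := by
      apply mul_le_mul_of_nonneg_left hbound (by positivity)
    refine h2.trans ?_
    have hAM : a * μ * Real.sqrt K ≤ ε / 2 * μ ^ 2 + a ^ 2 / (2 * ε) * K := by
      have key : 0 ≤ ε ^ 2 * μ ^ 2 + a ^ 2 * K - 2 * ε * (a * μ * Real.sqrt K) := by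
        nlinarith [sq_nonneg (ε * μ - a * Real.sqrt K), hs]
      have h6 : ε / 2 * μ ^ 2 + a ^ 2 / (2 * ε) * K - a * μ * Real.sqrt K
          = (ε ^ 2 * μ ^ 2 + a ^ 2 * K - 2 * ε * (a * μ * Real.sqrt K)) / (2 * ε) := by
        field_simp
      have h7 : 0 ≤ (ε ^ 2 * μ ^ 2 + a ^ 2 * K - 2 * ε * (a * μ * Real.sqrt K)) / (2 * ε) :=
        div_nonneg key (by positivity)
      linarith [h6 ▸ h7]
    have hexp : a * μ * (μ / c + Real.sqrt K) = a * μ * (μ / c) + a * μ * Real.sqrt K := by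
      ring
    linarith [hAM, hacμ, hexp]
  · -- K < 0 : then c < b
    have hc2 : c ^ 2 < b ^ 2 := by
      have h2 : c ^ 2 / b ^ 2 < 1 :=
        (Real.log_neg_iff (show (0:ℝ) < c ^ 2 / b ^ 2 by positivity)).mp (hK ▸ hK0)
      exact (div_lt_one (by positivity)).mp h2
    have hcb : c < b := lt_of_pow_lt_pow_left₀ 2 hb.le hc2
    have hbound : Real.sqrt (1 + Real.log (μ ^ 2 / b ^ 2)) ≤ μ / c := by
      have hle : 1 + Real.log (μ ^ 2 / b ^ 2) ≤ (μ / c) ^ 2 := by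
        rw [hsplit, hpow]; linarith
      calc Real.sqrt (1 + Real.log (μ ^ 2 / b ^ 2))
          ≤ Real.sqrt ((μ / c) ^ 2) := Real.sqrt_le_sqrt hle
        _ = μ / c := Real.sqrt_sq (by positivity)
    have h2 : a * μ * Real.sqrt (1 + Real.log (μ ^ 2 / b ^ 2)) ≤ a * μ * (μ / c) := by
      apply mul_le_mul_of_nonneg_left hbound (by positivity)
    refine h2.trans ?_
    rw [hacμ]
    have hnegK : -K = Real.log (b ^ 2 / c ^ 2) := by
      rw [hK, ← Real.log_inv]
      congr 1
      field_simp
    have hlogb : Real.log (b ^ 2 / c ^ 2) ≤ 2 * (b / c) := by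
      have h3 : b ^ 2 / c ^ 2 = (b / c) ^ 2 := (div_pow b c 2).symm
      rw [h3, Real.log_pow]
      push_cast
      have := Real.log_le_sub_one_of_pos (show (0:ℝ) < b / c by positivity)
      linarith
    have hnK : -K ≤ 2 * (b / c) := hnegK ▸ hlogb
    have hval : a ^ 2 / (2 * ε) * (2 * (b / c)) = a * b / 2 := by
      rw [hc]; field_simp
    have haε : 2 * a < b * ε := by
      rw [hc] at hcb
      exact (div_lt_iff₀ hε).mp hcb
    have hab : a * b / 2 < ε * b ^ 2 / 4 := by
      have e0 := mul_lt_mul_of_pos_right haε (show (0:ℝ) < b / 4 by positivity)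
      have e1 : a * b / 2 = 2 * a * (b / 4) := by ring
      have e2 : b * ε * (b / 4) = ε * b ^ 2 / 4 := by ring
      linarith
    have hmono : a ^ 2 / (2 * ε) * (-K) ≤ a ^ 2 / (2 * ε) * (2 * (b / c)) :=
      mul_le_mul_of_nonneg_left hnK (by positivity)
    have hscale : ε * b ^ 2 ≤ ε * μ ^ 2 :=
      mul_le_mul_of_nonneg_left (pow_le_pow_left₀ hb.le hμ 2) hε.le
    have hpos : 0 < ε * μ ^ 2 := by positivity
    linarith [hmono, hval, hab, hscale, hpos]
end
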